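/- Let b(q,v) = ∑_{p=0}^{v} (−1)^p C(v,p) s(p+1, p−q+1). Then b(q,2q) = (−1)^q ∏_{i=0}^{q−1} (2q−2i−1) = (−1)^q (2q−1)!! for all q ≥ 0, and b(q,v) = 0 whenever v > 2q. -/

import Mathlib

/-!
Put `a_q(p) = s(p+1, p+1-q)` (`stirlingSubdiag q p`). Expanding the iterated forward difference
binomially gives `b(q,v) = (-1)^v Δ^v a_q(0)`. The Stirling recurrence
`s(n+1,k) = s(n,k-1) - n s(n,k)` reads `Δ a_{q+1}(p) = -(p+1) a_q(p)`, and `a_0 = 1`. A Leibniz rule for multiplication by `p + 1` then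
gives `Δ^{m+2} a_{q+1}(0) = -((m+2) Δ^{m+1} a_q(0) + (m+1) Δ^m a_q(0))`, from which induction on `q`
shows that `Δ^v a_q(0)` vanishes for `v > 2q` and equals `(-1)^q (2q-1)!!` for `v = 2q`.
-/

open Finset Polynomial

/-- Signed Stirling numbers of the first kind: coefficient of x^k in x(x-1)⋯(x-n+1),
zero for negative k. -/
noncomputable def stirlingFst (n : ℕ) (k : ℤ) : ℤ :=
  if 0 ≤ k then (∏ i ∈ Finset.range n, (X - C (i : ℤ))).coeff k.toNat else 0

/-- b(q,v) = ∑_{p=0}^{v} (−1)^p C(v,p) s(p+1, p−q+1). -/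
noncomputable def b (q v : ℕ) : ℤ :=
  ∑ p ∈ Finset.range (v + 1), (-1 : ℤ) ^ p * (v.choose p) * stirlingFst (p + 1) ((p : ℤ) - q + 1)

open fwdDiff
open scoped Nat

lemma stirlingFst_succ (n : ℕ) (k : ℤ) :
    stirlingFst (n + 1) k = stirlingFst n (k - 1) - n * stirlingFst n k := by
  unfold stirlingFst
  rcases lt_trichotomy k 0 with hk | rfl | hk
  · simp only [if_neg (show ¬(0 : ℤ) ≤ k by omega), if_neg (show ¬(0 : ℤ) ≤ k - 1 by omega)]
    ring
  · simp [prod_range_succ, mul_coeff_zero, mul_comm]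
  · obtain ⟨m, rfl⟩ : ∃ m : ℕ, k = m + 1 := ⟨(k - 1).toNat, by omega⟩
    simp only [show (0 : ℤ) ≤ m + 1 by omega, show (0 : ℤ) ≤ m + 1 - 1 by omega, if_true,
      show ((m : ℤ) + 1).toNat = m + 1 by omega, show ((m : ℤ) + 1 - 1).toNat = m by omega,
      prod_range_succ, mul_sub, coeff_sub, coeff_mul_C, coeff_mul_X]
    ring

lemma stirlingFst_self (n : ℕ) : stirlingFst n n = 1 := by
  have hmonic : (∏ i ∈ range n, (X - C (i : ℤ))).Monic :=
    monic_prod_of_monic _ _ fun i _ => monic_X_sub_C (i : ℤ)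
  have hdeg : (∏ i ∈ range n, (X - C (i : ℤ))).natDegree = n := by
    rw [natDegree_finsetProd_X_sub_C_eq_card, card_range]
  rw [stirlingFst, if_pos (Int.natCast_nonneg n), Int.toNat_natCast, ← hmonic.coeff_natDegree,
    hdeg]

lemma fwdDiff_iter_apply_add {M G : Type*} [AddCommMonoid M] [AddCommGroup G] (h : M)
    (f : M → G) (n : ℕ) (x : M) :
    (Δ_[h])^[n] f (x + h) = (Δ_[h])^[n] f x + (Δ_[h])^[n + 1] f x := by
  rw [Function.iterate_succ_apply', fwdDiff]
  abel

lemma fwdDiff_iter_succ_mul_add {R : Type*} [CommRing R] (c : R) (f : ℕ → R) (n x : ℕ) :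
    (Δ_[1])^[n + 1] (fun p : ℕ => ((p : R) + c) * f p) x
      = ((x : R) + c + n + 1) * (Δ_[1])^[n + 1] f x + (n + 1) * (Δ_[1])^[n] f x := by
  induction n generalizing x with
  | zero =>
    simp only [zero_add, Function.iterate_one, Function.iterate_zero, id_eq, fwdDiff]
    push_cast
    ring
  | succ n ih =>
    rw [Function.iterate_succ_apply', fwdDiff, ih, ih, fwdDiff_iter_apply_add,
      fwdDiff_iter_apply_add]
    push_cast
    ring

noncomputable def stirlingSubdiag (q p : ℕ) : ℤ := stirlingFst (p + 1) ((p : ℤ) - q + 1)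

lemma stirlingSubdiag_zero : stirlingSubdiag 0 = fun _ => 1 := by
  funext p
  simpa [stirlingSubdiag] using stirlingFst_self (p + 1)

lemma fwdDiff_stirlingSubdiag_succ (q : ℕ) :
    Δ_[1] (stirlingSubdiag (q + 1))
      = (-1 : ℤ) • fun p : ℕ => ((p : ℤ) + 1) * stirlingSubdiag q p := by
  funext p
  simp only [fwdDiff, stirlingSubdiag, Pi.smul_apply, smul_eq_mul]
  rw [stirlingFst_succ (p + 1)]
  push_cast
  ring_nf

lemma b_eq_neg_one_pow_mul_fwdDiff_iter (q v : ℕ) :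
    b q v = (-1) ^ v * (Δ_[1])^[v] (stirlingSubdiag q) 0 := by
  rw [fwdDiff_iter_eq_sum_shift, mul_sum, b]
  refine sum_congr rfl fun k hk => ?_
  obtain ⟨j, rfl⟩ : ∃ j, v = j + k := ⟨v - k, by have := mem_range.mp hk; omega⟩
  simp only [stirlingSubdiag, smul_eq_mul, zero_add, mul_one, Nat.add_sub_cancel, pow_add]
  have hsq : (-1 : ℤ) ^ j * (-1) ^ j = 1 := by rw [← mul_pow]; norm_num
  linear_combination
    (-((-1) ^ k * ((j + k).choose k : ℤ) * stirlingFst (k + 1) (k - q + 1))) * hsq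

lemma fwdDiff_iter_stirlingSubdiag_succ (q m : ℕ) :
    (Δ_[1])^[m + 2] (stirlingSubdiag (q + 1)) 0
      = -((m + 2) * (Δ_[1])^[m + 1] (stirlingSubdiag q) 0
          + (m + 1) * (Δ_[1])^[m] (stirlingSubdiag q) 0) := by
  rw [Function.iterate_succ_apply, fwdDiff_stirlingSubdiag_succ, fwdDiff_iter_const_smul,
    Pi.smul_apply, fwdDiff_iter_succ_mul_add]
  push_cast
  ring

lemma fwdDiff_iter_stirlingSubdiag_eq_zero {q v : ℕ} (hv : 2 * q < v) :
    (Δ_[1])^[v] (stirlingSubdiag q) 0 = 0 := by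
  induction q generalizing v with
  | zero =>
    obtain ⟨w, rfl⟩ : ∃ w, v = w + 1 := ⟨v - 1, by omega⟩
    rw [Function.iterate_succ_apply, stirlingSubdiag_zero, fwdDiff_const,
      Function.iterate_fixed (fwdDiff_const 1 (0 : ℤ))]
  | succ q ih =>
    obtain ⟨m, rfl⟩ : ∃ m, v = m + 2 := ⟨v - 2, by omega⟩
    rw [fwdDiff_iter_stirlingSubdiag_succ, ih (by omega), ih (by omega)]
    ring

lemma fwdDiff_iter_two_mul_stirlingSubdiag (q : ℕ) :
    (Δ_[1])^[2 * q] (stirlingSubdiag q) 0 = (-1) ^ q * ((2 * q - 1)‼ : ℕ) := by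
  induction q with
  | zero => simp [stirlingSubdiag_zero]
  | succ q ih =>
    rw [show 2 * (q + 1) = 2 * q + 2 by ring, fwdDiff_iter_stirlingSubdiag_succ,
      fwdDiff_iter_stirlingSubdiag_eq_zero (by omega), ih, show 2 * q + 2 - 1 = 2 * q + 1 by omega,
      Nat.doubleFactorial_add_one]
    push_cast
    ring

lemma prod_range_two_mul_sub_eq_doubleFactorial (q : ℕ) :
    ∏ i ∈ range q, (2 * (q : ℤ) - 2 * i - 1) = ((2 * q - 1)‼ : ℕ) := by
  induction q with
  | zero => simp
  | succ q ih =>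
    have hshift : ∀ i ∈ range q,
        2 * ((q + 1 : ℕ) : ℤ) - 2 * ((i + 1 : ℕ) : ℤ) - 1 = 2 * q - 2 * i - 1 :=
      fun i _ => by push_cast; ring
    rw [prod_range_succ', prod_congr rfl hshift, ih, show 2 * (q + 1) - 1 = 2 * q + 1 by omega,
      Nat.doubleFactorial_add_one]
    push_cast
    ring

/-- b(q,2q) = (−1)^q ∏_{i=0}^{q−1}(2q−2i−1) = (−1)^q (2q−1)!!, and b(q,v) = 0 for v > 2q. -/
theorem stmt13 :
    (∀ q : ℕ,
      b q (2 * q) = (-1 : ℤ) ^ q * ∏ i ∈ Finset.range q, (2 * (q : ℤ) - 2 * i - 1) ∧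
      b q (2 * q) = (-1 : ℤ) ^ q * (Nat.doubleFactorial (2 * q - 1) : ℤ)) ∧
    (∀ q v : ℕ, 2 * q < v → b q v = 0) := by
  refine ⟨fun q => ?_, fun q v hv => ?_⟩
  · have hb : b q (2 * q) = (-1) ^ q * ((2 * q - 1)‼ : ℕ) := by
      rw [b_eq_neg_one_pow_mul_fwdDiff_iter, fwdDiff_iter_two_mul_stirlingSubdiag, pow_mul]
      norm_num
    exact ⟨by rw [hb, prod_range_two_mul_sub_eq_doubleFactorial], hb⟩
  · rw [b_eq_neg_one_pow_mul_fwdDiff_iter, fwdDiff_iter_stirlingSubdiag_eq_zero hv, mul_zero]
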